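/- arXiv:1906.07130 — 2 statements merged into one kernel-verified Lean document; each statement's English description precedes it below -/
import Mathlib

section
/- The cofactor expansion of ξ^{(m)}_{t,s} along the last row yields the recurrence ξ^{(m)}_{t,s} = Σ_{i=1}^p φ_i(t) ξ^{(m)}_{t−i,s} for t > s. -/
/-- The `k × k` banded lower Hessenberg matrix `Φ^{(m)}_{t,s}` (here `k = t - s`),
0-indexed: superdiagonal entries are `-1`; first-column entries (row `i`, 0-indexed) are
`φ_{i+m}(s+i+1)` when `i + m ≤ p` and `0` otherwise; for columns `j ≥ 1` (0-indexed) the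
`(i,j)` entry is `φ_{i-j+1}(s+i+1)` when `j ≤ i` and `i - j + 1 ≤ p`, and `0` otherwise. -/
def Phi (p : ℕ) (φ : ℕ → ℤ → ℂ) (m : ℕ) (s : ℤ) (k : ℕ) :
    Matrix (Fin k) (Fin k) ℂ :=
  Matrix.of fun i j =>
    if (j : ℕ) = (i : ℕ) + 1 then -1
    else if (j : ℕ) = 0 then
      (if (i : ℕ) + m ≤ p then φ ((i : ℕ) + m) (s + (i : ℕ) + 1) else 0)
    else if (j : ℕ) ≤ (i : ℕ) then
      (if (i : ℕ) - (j : ℕ) + 1 ≤ p then φ ((i : ℕ) - (j : ℕ) + 1) (s + (i : ℕ) + 1)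
        else 0)
    else 0

lemma Phi_congr (p : ℕ) (φ : ℕ → ℤ → ℂ) (m : ℕ) (s : ℤ) {k k' : ℕ}
    (i j : Fin k) (i' j' : Fin k')
    (hi : (i : ℕ) = (i' : ℕ)) (hj : (j : ℕ) = (j' : ℕ)) :
    Phi p φ m s k i j = Phi p φ m s k' i' j' := by
  simp only [Phi, Matrix.of_apply, hi, hj]

lemma neg_one_pow_aux (a b : ℂ) (x y n : ℕ) (h : x + y = 2 * n) :
    (-1 : ℂ) ^ x * a * ((-1 : ℂ) ^ y * b) = a * b := by
  have h1 : ((-1 : ℂ)) ^ x * (-1 : ℂ) ^ y = 1 := by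
    rw [← pow_add, h, pow_mul]; norm_num
  calc (-1 : ℂ) ^ x * a * ((-1 : ℂ) ^ y * b)
      = ((-1 : ℂ) ^ x * (-1 : ℂ) ^ y) * (a * b) := by ring
    _ = a * b := by rw [h1, one_mul]

lemma minor_det (p : ℕ) (φ : ℕ → ℤ → ℂ) (m : ℕ) (s : ℤ) :
    ∀ (k : ℕ) (j : Fin (k + 1)),
      ((Phi p φ m s (k + 1)).submatrix Fin.castSucc j.succAbove).det
        = (-1 : ℂ) ^ (k - (j : ℕ)) * (Phi p φ m s (j : ℕ)).det := by
  intro k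
  induction k with
  | zero =>
    intro j
    have hj : (j : ℕ) = 0 := Nat.lt_one_iff.mp j.isLt
    rw [hj]
    simp [Matrix.det_fin_zero]
  | succ k ih =>
    intro j
    induction j using Fin.lastCases with
    | last =>
      have h1 : (Phi p φ m s (k + 2)).submatrix Fin.castSucc
          (Fin.last (k + 1)).succAbove = Phi p φ m s (k + 1) := by
        rw [Fin.succAbove_last]
        ext a b
        exact Phi_congr p φ m s _ _ a b (by simp) (by simp)
      rw [h1]
      simp [Fin.val_last]
    | cast j' =>
      set M := (Phi p φ m s (k + 2)).submatrix Fin.castSucc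
        (Fin.castSucc j').succAbove with hM
      have hcol : ∀ i : Fin (k + 1),
          M i (Fin.last k) = Phi p φ m s (k + 2) (Fin.castSucc i) (Fin.last (k + 1)) := by
        intro i
        have : (Fin.castSucc j').succAbove (Fin.last k) = Fin.last (k + 1) := by
          rw [Fin.succAbove_of_le_castSucc _ _ (by
            simp [Fin.le_def, Fin.is_le])]
          exact Fin.succ_last k
        rw [hM]
        simp only [Matrix.submatrix_apply, this]
      have hzero : ∀ i : Fin (k + 1), i ≠ Fin.last k → M i (Fin.last k) = 0 := by
        intro i hi
        rw [hcol i]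
        have h1 : (i : ℕ) < k := by
          have := Fin.is_le i
          rcases Nat.lt_or_ge (i : ℕ) k with h | h
          · exact h
          · exact absurd (by apply Fin.ext; rw [Fin.val_last]; omega) hi
        simp only [Phi, Matrix.of_apply, Fin.val_last, Fin.coe_castSucc]
        rw [if_neg (by omega), if_neg (by omega), if_neg (by omega)]
      have hlast : M (Fin.last k) (Fin.last k) = -1 := by
        rw [hcol]
        simp only [Phi, Matrix.of_apply, Fin.val_last, Fin.coe_castSucc]
        simp
      have hsub : M.submatrix (Fin.last k).succAbove (Fin.last k).succAbove
          = (Phi p φ m s (k + 1)).submatrix Fin.castSucc j'.succAbove := by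
        rw [Fin.succAbove_last]
        ext a b
        simp only [Matrix.submatrix_apply, hM]
        rw [Fin.castSucc_succAbove_castSucc]
        exact Phi_congr p φ m s _ _ _ _ (by simp) (by simp)
      rw [Matrix.det_succ_column M (Fin.last k),
        Finset.sum_eq_single (Fin.last k)
          (fun b _ hb => by rw [hzero b hb]; ring)
          (fun h => absurd (Finset.mem_univ _) h)]
      rw [hlast, hsub, ih j']
      have h2 : (k + 1) - ((Fin.castSucc j' : Fin (k + 2)) : ℕ) = (k - (j' : ℕ)) + 1 := by
        have := Fin.is_le j'
        simp only [Fin.coe_castSucc]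
        omega
      rw [h2, Fin.val_last, Fin.coe_castSucc, pow_succ]
      have h3 : ((-1 : ℂ)) ^ (k + k) = 1 := by
        rw [← two_mul, pow_mul]; norm_num
      rw [h3]
      ring

lemma det_phi_succ (p : ℕ) (φ : ℕ → ℤ → ℂ) (m : ℕ) (s : ℤ) (k : ℕ) :
    (Phi p φ m s (k + 1)).det
      = ∑ j : Fin (k + 1),
          Phi p φ m s (k + 1) (Fin.last k) j * (Phi p φ m s (j : ℕ)).det := by
  rw [Matrix.det_succ_row _ (Fin.last k)]
  refine Finset.sum_congr rfl fun j _ => ?_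
  rw [Fin.succAbove_last, minor_det p φ m s k j, Fin.val_last]
  exact neg_one_pow_aux _ _ _ _ k (by have := Fin.is_le j; omega)

/-- The fundamental solution `ξ^{(m)}_{t,s}`: the banded Hessenbergian
`det(Φ^{(m)}_{t,s})` for `t > s`; `1` for `t = s - m + 1`; `0` for other
`t ∈ [s - p + 1, s]`. -/
def xi (p : ℕ) (φ : ℕ → ℤ → ℂ) (m : ℕ) (s t : ℤ) : ℂ :=
  if s < t then (Phi p φ m s (t - s).toNat).det
  else if t = s - (m : ℤ) + 1 then 1 else 0

/-- Cofactor expansion of `ξ^{(m)}_{t,s}` along the last row yields the recurrence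
`ξ^{(m)}_{t,s} = Σ_{i=1}^p φ_i(t) ξ^{(m)}_{t-i,s}` for `t > s`. -/
theorem stmt16 (p : ℕ) (hp : 1 ≤ p) (φ : ℕ → ℤ → ℂ)
    (m : ℕ) (hm1 : 1 ≤ m) (hmp : m ≤ p) (s t : ℤ) (ht : s < t) :
    xi p φ m s t = ∑ i ∈ Finset.Icc 1 p, φ i t * xi p φ m s (t - (i : ℤ)) := by
  obtain ⟨k, hk⟩ : ∃ k : ℕ, (t - s).toNat = k + 1 := by
    refine ⟨(t - s).toNat - 1, by omega⟩
  have ht' : t = s + (k : ℤ) + 1 := by omega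
  set E : ℕ → ℂ := fun j =>
    if j = k + 1 then -1
    else if j = 0 then (if k + m ≤ p then φ (k + m) t else 0)
    else if j ≤ k then (if k - j + 1 ≤ p then φ (k - j + 1) t else 0)
    else 0 with hEdef
  have hE : ∀ j : Fin (k + 1), Phi p φ m s (k + 1) (Fin.last k) j = E (j : ℕ) := by
    intro j
    simp only [Phi, Matrix.of_apply, Fin.val_last, hEdef]
    rw [ht']
  have hG0 : (Phi p φ m s 0).det = 1 := Matrix.det_fin_zero
  have hL : xi p φ m s t = (if k + m ≤ p then φ (k + m) t else 0)
      + ∑ i ∈ Finset.Icc 1 k,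
          (if i ≤ p then φ i t else 0) * (Phi p φ m s (k + 1 - i)).det := by
    unfold xi
    rw [if_pos ht, hk, det_phi_succ]
    calc ∑ j : Fin (k + 1), Phi p φ m s (k + 1) (Fin.last k) j * (Phi p φ m s (j : ℕ)).det
        = ∑ j : Fin (k + 1), E (j : ℕ) * (Phi p φ m s (j : ℕ)).det := by
          exact Finset.sum_congr rfl fun j _ => by rw [hE]
      _ = ∑ j ∈ Finset.range (k + 1), E j * (Phi p φ m s j).det :=
          Fin.sum_univ_eq_sum_range (fun j => E j * (Phi p φ m s j).det) (k + 1)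
      _ = E 0 * (Phi p φ m s 0).det
          + ∑ j ∈ Finset.Icc 1 k, E j * (Phi p φ m s j).det := by
          rw [show Finset.range (k + 1) = insert 0 (Finset.Icc 1 k) from by
            ext x; simp; omega, Finset.sum_insert (by simp)]
      _ = (if k + m ≤ p then φ (k + m) t else 0)
          + ∑ i ∈ Finset.Icc 1 k,
              (if i ≤ p then φ i t else 0) * (Phi p φ m s (k + 1 - i)).det := by
          congr 1
          · rw [hG0, mul_one, hEdef]
            simp
          · refine Finset.sum_nbij' (fun j => k + 1 - j) (fun i => k + 1 - i)
              ?_ ?_ ?_ ?_ ?_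
            · intro a ha; simp only [Finset.mem_Icc] at ha ⊢; omega
            · intro a ha; simp only [Finset.mem_Icc] at ha ⊢; omega
            · intro a ha; simp only [Finset.mem_Icc] at ha
              show k + 1 - (k + 1 - a) = a; omega
            · intro a ha; simp only [Finset.mem_Icc] at ha
              show k + 1 - (k + 1 - a) = a; omega
            · intro j hj
              simp only [Finset.mem_Icc] at hj
              rw [hEdef]
              simp only []
              rw [if_neg (by omega), if_neg (by omega), if_pos (by omega),
                show k - j + 1 = k + 1 - j from by omega,
                show k + 1 - (k + 1 - j) = j from by omega]
  have hxi : ∀ i, 1 ≤ i → i ≤ p →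
      xi p φ m s (t - (i : ℤ))
        = (if i ≤ k then (Phi p φ m s (k + 1 - i)).det
           else if i = k + m then 1 else 0) := by
    intro i h1 h2
    by_cases hik : i ≤ k
    · rw [if_pos hik]
      unfold xi
      rw [if_pos (by omega), show (t - (i : ℤ) - s).toNat = k + 1 - i from by omega]
    · rw [if_neg hik]
      unfold xi
      rw [if_neg (by omega)]
      by_cases h3 : i = k + m
      · rw [if_pos h3, if_pos (by rw [h3]; push_cast; omega)]
      · rw [if_neg h3, if_neg (by intro hc; apply h3; omega)]
  have hset : (Finset.Icc 1 p).filter (· ≤ k) = (Finset.Icc 1 k).filter (· ≤ p) := by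
    ext x; simp only [Finset.mem_filter, Finset.mem_Icc]; omega
  have hR : ∑ i ∈ Finset.Icc 1 p, φ i t * xi p φ m s (t - (i : ℤ))
      = (if k + m ≤ p then φ (k + m) t else 0)
        + ∑ i ∈ Finset.Icc 1 k,
            (if i ≤ p then φ i t else 0) * (Phi p φ m s (k + 1 - i)).det := by
    calc ∑ i ∈ Finset.Icc 1 p, φ i t * xi p φ m s (t - (i : ℤ))
        = ∑ i ∈ Finset.Icc 1 p,
            (if i ≤ k then φ i t * (Phi p φ m s (k + 1 - i)).det
             else if i = k + m then φ i t else 0) := by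
          refine Finset.sum_congr rfl fun i hi => ?_
          simp only [Finset.mem_Icc] at hi
          rw [hxi i hi.1 hi.2]
          split_ifs <;> ring
      _ = (∑ i ∈ (Finset.Icc 1 p).filter (· ≤ k),
            φ i t * (Phi p φ m s (k + 1 - i)).det)
          + ∑ i ∈ (Finset.Icc 1 p).filter (fun i => ¬ i ≤ k),
              (if i = k + m then φ i t else 0) := Finset.sum_ite _ _
      _ = (∑ i ∈ Finset.Icc 1 k,
            (if i ≤ p then φ i t else 0) * (Phi p φ m s (k + 1 - i)).det)
          + (if k + m ≤ p then φ (k + m) t else 0) := by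
          congr 1
          · rw [hset, Finset.sum_filter]
            refine Finset.sum_congr rfl fun i hi => ?_
            split_ifs <;> ring
          · rw [Finset.sum_ite_eq' _ (k + m) (fun i => φ i t)]
            by_cases hq : k + m ≤ p
            · rw [if_pos (by simp only [Finset.mem_filter, Finset.mem_Icc]; omega),
                if_pos hq]
            · rw [if_neg (by simp only [Finset.mem_filter, Finset.mem_Icc]; omega),
                if_neg hq]
      _ = (if k + m ≤ p then φ (k + m) t else 0)
          + ∑ i ∈ Finset.Icc 1 k,
              (if i ≤ p then φ i t else 0) * (Phi p φ m s (k + 1 - i)).det := by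
          rw [add_comm]
  rw [hL, hR]
end

section
/- The function p_t := Σ_{j=1}^{t−s} ξ_{t,s+j} v_{s+j} solves the nonhomogeneous equation y_t = Σ_{i=1}^p φ_i(t) y_{t−i} + v_t for t > s, subject to zero initial values p_s = p_{s−1} = ··· = p_{s−p+1} = 0. -/
def PhiEnt (p : ℕ) (φ : ℕ → ℤ → ℂ) (m : ℕ) (s : ℤ) (i j : ℕ) : ℂ :=
  if j = i + 1 then -1
  else if j = 0 then
    (if i + m ≤ p then φ (i + m) (s + i + 1) else 0)
  else if j ≤ i then
    (if i - j + 1 ≤ p then φ (i - j + 1) (s + i + 1) else 0)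
  else 0

lemma Phi_apply (p : ℕ) (φ : ℕ → ℤ → ℂ) (m : ℕ) (s : ℤ) (k : ℕ) (i j : Fin k) :
    Phi p φ m s k i j = PhiEnt p φ m s (i : ℕ) (j : ℕ) := rfl

lemma Phi_principal (p : ℕ) (φ : ℕ → ℤ → ℂ) (s : ℤ) (n : ℕ) :
    (Phi p φ 1 s (n+1)).submatrix Fin.castSucc Fin.castSucc = Phi p φ 1 s n := by
  ext i j
  rw [Matrix.submatrix_apply, Phi_apply, Phi_apply, Fin.coe_castSucc, Fin.coe_castSucc]

lemma Phi_minor (p : ℕ) (φ : ℕ → ℤ → ℂ) (s : ℤ) :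
    ∀ n : ℕ, ∀ j : Fin (n+1),
    ((Phi p φ 1 s (n+1)).submatrix Fin.castSucc j.succAbove).det
      = (-1 : ℂ)^(n - (j:ℕ)) * (Phi p φ 1 s (j:ℕ)).det := by
  intro n
  induction n with
  | zero =>
      intro j
      fin_cases j
      simp [Matrix.det_fin_zero]
  | succ n ih =>
      intro j
      by_cases hj : j = Fin.last (n+1)
      · subst hj
        rw [Fin.succAbove_last, Phi_principal]
        simp
      · have hjn : (j : ℕ) ≤ n := by
          have := Fin.lt_last_iff_ne_last.2 hj
          omega
        set M := (Phi p φ 1 s (n+2)).submatrix Fin.castSucc j.succAbove with hM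
        have hcol : ∀ i : Fin (n+1), M i (Fin.last n) = if i = Fin.last n then -1 else 0 := by
          intro i
          have h1 : j.succAbove (Fin.last n) = Fin.last (n+1) := by
            rw [Fin.succAbove, if_neg]
            · rfl
            · simp [Fin.lt_iff_val_lt_val]
              omega
          rw [hM, Matrix.submatrix_apply, h1, Phi_apply]
          by_cases hi : i = Fin.last n
          · subst hi
            simp [PhiEnt]
          · have hlt : (i : ℕ) < n := by
              have := Fin.lt_last_iff_ne_last.2 hi
              omega
            rw [if_neg hi]
            simp only [PhiEnt, Fin.coe_castSucc, Fin.val_last]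
            rw [if_neg (by omega), if_neg (by omega), if_neg (by omega)]
        rw [Matrix.det_succ_column M (Fin.last n)]
        rw [Fintype.sum_eq_single (Fin.last n) (by
          intro i hi
          rw [hcol, if_neg hi]
          ring)]
        rw [hcol, if_pos rfl]
        set j' : Fin (n+1+1-1) := ⟨(j : ℕ), by omega⟩ with hj'
        have hsub : M.submatrix (Fin.last n).succAbove (Fin.last n).succAbove
            = (Phi p φ 1 s (n+1)).submatrix Fin.castSucc j'.succAbove := by
          ext a b
          simp only [Matrix.submatrix_apply, hM, Fin.succAbove_last]
          rw [Phi_apply, Phi_apply]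
          have hr : ((Fin.castSucc (Fin.castSucc a)) : ℕ) = ((Fin.castSucc a) : ℕ) := by simp
          have hc : ((j.succAbove (Fin.castSucc b)) : ℕ) = ((j'.succAbove b) : ℕ) := by
            simp only [Fin.succAbove, Fin.lt_iff_val_lt_val, Fin.coe_castSucc]
            by_cases hb : (b : ℕ) < (j : ℕ)
            · rw [if_pos (by simpa using hb), if_pos (by simpa [hj'] using hb)]
              simp
            · rw [if_neg (by simpa using hb), if_neg (by simpa [hj'] using hb)]
              simp
          rw [hr, hc]
        rw [hsub, ih j']
        have hval : ((j' : Fin (n+1)) : ℕ) = (j : ℕ) := rfl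
        rw [hval]
        rw [show n + 1 - (j:ℕ) = (n - (j:ℕ)) + 1 by omega]
        simp [Fin.val_last]
        ring

lemma Phi_det_rec (p : ℕ) (φ : ℕ → ℤ → ℂ) (s : ℤ) (k : ℕ) :
    (Phi p φ 1 s (k+1)).det
      = ∑ j : Fin (k+1),
          (if k+1-(j:ℕ) ≤ p then φ (k+1-(j:ℕ)) (s+(k:ℤ)+1) else 0)
            * (Phi p φ 1 s (j:ℕ)).det := by
  rw [Matrix.det_succ_row _ (Fin.last k)]
  refine Finset.sum_congr rfl fun j _ => ?_
  rw [Fin.succAbove_last, Phi_minor, Phi_apply]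
  have hsign : (-1:ℂ)^((Fin.last k : ℕ) + (j:ℕ)) * (-1:ℂ)^(k - (j:ℕ)) = 1 := by
    rw [← pow_add, Fin.val_last, show k + (j:ℕ) + (k - (j:ℕ)) = 2*k by omega]
    simp [pow_mul]
  have hentry : PhiEnt p φ 1 s ((Fin.last k : ℕ)) (j:ℕ)
      = (if k+1-(j:ℕ) ≤ p then φ (k+1-(j:ℕ)) (s+(k:ℤ)+1) else 0) := by
    rw [Fin.val_last]
    have hjk : (j:ℕ) ≤ k := by omega
    by_cases hj0 : (j:ℕ) = 0
    · simp only [PhiEnt, hj0]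
      norm_num
    · simp only [PhiEnt]
      rw [if_neg (by omega), if_neg hj0, if_pos hjk,
        show k - (j:ℕ) + 1 = k + 1 - (j:ℕ) by omega]
  rw [hentry]
  calc (-1:ℂ)^((Fin.last k : ℕ) + (j:ℕ))
        * (if k+1-(j:ℕ) ≤ p then φ (k+1-(j:ℕ)) (s+(k:ℤ)+1) else 0)
        * ((-1:ℂ)^(k - (j:ℕ)) * (Phi p φ 1 s (j:ℕ)).det)
      = ((-1:ℂ)^((Fin.last k : ℕ) + (j:ℕ)) * (-1:ℂ)^(k - (j:ℕ)))
        * ((if k+1-(j:ℕ) ≤ p then φ (k+1-(j:ℕ)) (s+(k:ℤ)+1) else 0)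
            * (Phi p φ 1 s (j:ℕ)).det) := by ring
    _ = _ := by rw [hsign]; ring

lemma xi_rec (p : ℕ) (φ : ℕ → ℤ → ℂ) (s t : ℤ) (hst : s < t) :
    xi p φ 1 s t = ∑ i ∈ Finset.Icc 1 p, φ i t * xi p φ 1 s (t - (i:ℤ)) := by
  have hks : ((t - s).toNat : ℤ) = t - s := Int.toNat_of_nonneg (by omega)
  obtain ⟨k', hk'⟩ : ∃ k', (t-s).toNat = k' + 1 := ⟨(t-s).toNat - 1, by omega⟩
  have hts : t = s + (k' : ℤ) + 1 := by omega
  set g : ℕ → ℂ := fun i =>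
    if i ≤ p ∧ i ≤ k'+1 then φ i t * (Phi p φ 1 s (k'+1-i)).det else 0 with hg
  have hstep1 : xi p φ 1 s t = ∑ i ∈ Finset.Icc 1 (k'+1), g i := by
    rw [xi, if_pos hst, hk', Phi_det_rec,
      Fin.sum_univ_eq_sum_range
        (fun m => (if k'+1-m ≤ p then φ (k'+1-m) (s+(k':ℤ)+1) else 0)
          * (Phi p φ 1 s m).det) (k'+1)]
    apply Finset.sum_nbij' (i := fun j => k'+1-j) (j := fun i => k'+1-i)
    · intro a ha
      simp only [Finset.mem_range] at ha
      simp only [Finset.mem_Icc]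
      omega
    · intro a ha
      simp only [Finset.mem_Icc] at ha
      simp only [Finset.mem_range]
      omega
    · intro a ha
      simp only [Finset.mem_range] at ha
      omega
    · intro a ha
      simp only [Finset.mem_Icc] at ha
      omega
    · intro a ha
      simp only [Finset.mem_range] at ha
      simp only [hg]
      rw [show k'+1-(k'+1-a) = a by omega, ← hts]
      by_cases hap : k'+1-a ≤ p
      · rw [if_pos hap, if_pos ⟨hap, by omega⟩]
      · rw [if_neg hap, if_neg (by tauto), zero_mul]
  have hstep2 : ∑ i ∈ Finset.Icc 1 (k'+1), g i = ∑ i ∈ Finset.Icc 1 p, g i := by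
    have ha : ∑ i ∈ Finset.Icc 1 (k'+1), g i
        = ∑ i ∈ Finset.Icc 1 (max (k'+1) p), g i := by
      apply Finset.sum_subset (Finset.Icc_subset_Icc le_rfl (le_max_left _ _))
      intro x hx hnx
      simp only [Finset.mem_Icc] at hx hnx
      simp only [hg]
      rw [if_neg (by omega)]
    have hb : ∑ i ∈ Finset.Icc 1 p, g i
        = ∑ i ∈ Finset.Icc 1 (max (k'+1) p), g i := by
      apply Finset.sum_subset (Finset.Icc_subset_Icc le_rfl (le_max_right _ _))
      intro x hx hnx
      simp only [Finset.mem_Icc] at hx hnx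
      simp only [hg]
      rw [if_neg (by omega)]
    rw [ha, hb]
  rw [hstep1, hstep2]
  apply Finset.sum_congr rfl
  intro i hi
  simp only [Finset.mem_Icc] at hi
  simp only [hg]
  by_cases h1 : i < k'+1
  · rw [if_pos ⟨hi.2, by omega⟩, xi, if_pos (by omega),
      show (t - (i:ℤ) - s).toNat = k'+1-i by omega]
  · by_cases h2 : i = k'+1
    · rw [if_pos ⟨hi.2, by omega⟩, xi, if_neg (by omega), if_pos (by push_cast; omega)]
      rw [show k'+1-i = 0 by omega]
      rw [Matrix.det_fin_zero, mul_one]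
    · rw [if_neg (by omega), xi, if_neg (by omega), if_neg (by push_cast; omega), mul_zero]

/-- The function `P t = Σ_{j=1}^{t-s} ξ_{t,s+j} v_{s+j}` solves the nonhomogeneous
equation `y_t = Σ_{i=1}^p φ_i(t) y_{t-i} + v_t` for `t > s`, subject to zero initial
values `P_s = P_{s-1} = ⋯ = P_{s-p+1} = 0`. -/
theorem stmt18 (p : ℕ) (hp : 1 ≤ p) (φ : ℕ → ℤ → ℂ) (v : ℤ → ℂ) (s : ℤ)
    (P : ℤ → ℂ)
    (hP : ∀ t : ℤ, P t =
      ∑ j ∈ Finset.Icc 1 (t - s).toNat, xi p φ 1 (s + (j : ℤ)) t * v (s + (j : ℤ))) :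
    (∀ t : ℤ, s - (p : ℤ) + 1 ≤ t → t ≤ s → P t = 0) ∧
    (∀ t : ℤ, s < t →
      P t = (∑ i ∈ Finset.Icc 1 p, φ i t * P (t - (i : ℤ))) + v t) := by
  constructor
  · intro t h1 h2
    rw [hP t, show (t - s).toNat = 0 by omega]
    simp
  · intro t hst
    have hK : (((t-s).toNat : ℕ) : ℤ) = t - s := Int.toNat_of_nonneg (by omega)
    obtain ⟨K', hK'⟩ : ∃ K', (t-s).toNat = K' + 1 := ⟨(t-s).toNat - 1, by omega⟩
    rw [hK'] at hK
    rw [hP t, hK', Finset.sum_Icc_succ_top (by omega : 1 ≤ K'+1)]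
    have hlast : s + (((K'+1 : ℕ)) : ℤ) = t := by push_cast at hK ⊢; omega
    rw [hlast]
    have hxitt : xi p φ 1 t t = 1 := by
      rw [xi, if_neg (by omega), if_pos (by push_cast; ring)]
    rw [hxitt, one_mul]
    congr 1
    calc ∑ j ∈ Finset.Icc 1 K', xi p φ 1 (s + (j:ℤ)) t * v (s + (j:ℤ))
        = ∑ j ∈ Finset.Icc 1 K', ∑ i ∈ Finset.Icc 1 p,
            φ i t * xi p φ 1 (s + (j:ℤ)) (t - (i:ℤ)) * v (s + (j:ℤ)) := by
          refine Finset.sum_congr rfl fun j hj => ?_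
          simp only [Finset.mem_Icc] at hj
          rw [xi_rec p φ (s + (j:ℤ)) t (by push_cast at hK ⊢; omega), Finset.sum_mul]
      _ = ∑ i ∈ Finset.Icc 1 p, φ i t * P (t - (i:ℤ)) := by
          rw [Finset.sum_comm]
          refine Finset.sum_congr rfl fun i hi => ?_
          simp only [Finset.mem_Icc] at hi
          rw [hP (t - (i:ℤ)), Finset.mul_sum]
          have hle : (t - (i:ℤ) - s).toNat ≤ K' := by push_cast at hK; omega
          rw [show (∑ j ∈ Finset.Icc 1 (t - (i:ℤ) - s).toNat,
              φ i t * (xi p φ 1 (s + (j:ℤ)) (t - (i:ℤ)) * v (s + (j:ℤ))))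
              = ∑ j ∈ Finset.Icc 1 K',
              φ i t * (xi p φ 1 (s + (j:ℤ)) (t - (i:ℤ)) * v (s + (j:ℤ))) from
            Finset.sum_subset (Finset.Icc_subset_Icc le_rfl hle) (by
              intro x hx hnx
              simp only [Finset.mem_Icc] at hx hnx
              have hxz : xi p φ 1 (s + (x:ℤ)) (t - (i:ℤ)) = 0 := by
                rw [xi, if_neg (by push_cast at hK ⊢; omega),
                  if_neg (by push_cast at hK ⊢; omega)]
              rw [hxz]
              ring)]
          refine Finset.sum_congr rfl fun j hj => ?_
          ring
end
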